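/- arXiv:1804.09463 — 3 statements merged into one kernel-verified Lean document; each statement's English description precedes it below -/
import Mathlib

section
/- Let (ω₁,v₁), (ω₂,v₂) ∈ so(n) × ℝⁿ satisfy ω₁ v₁ = 0 and ω₂ v₂ = 0. Then (ω₁,v₁) and (ω₂,v₂) lie in the same adjoint orbit of E(n) (i.e. ∃ g ∈ E(n), Ad_g(ω₁,v₁) = (ω₂,v₂)) if and only if they lie in the same coadjoint orbit of E(n) (i.e. ∃ g ∈ E(n), Ad*_g(ω₁,v₁) = (ω₂,v₂)). -/
open Matrix

abbrev Mat (n : ℕ) := Matrix (Fin n) (Fin n) ℝ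
abbrev Vec (n : ℕ) := Fin n → ℝ

/-- `r` is an orthogonal matrix. -/
def IsOrth {n : ℕ} (r : Mat n) : Prop := r * rᵀ = 1 ∧ rᵀ * r = 1

/-- `ω` is skew-symmetric. -/
def IsSkew {n : ℕ} (ω : Mat n) : Prop := ωᵀ = -ω

/-- Adjoint action of `(r,d) ∈ E(n)` on `(ω,v) ∈ so(n) × ℝⁿ`. -/
noncomputable def Ad {n : ℕ} (r : Mat n) (d : Vec n) (ω : Mat n) (v : Vec n) :
    Mat n × Vec n :=
  (r * ω * r⁻¹, r *ᵥ v - (r * ω * r⁻¹) *ᵥ d)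

/-- The momentum map `μ(p,d) = ½(p dᵀ − d pᵀ)`. -/
noncomputable def mu {n : ℕ} (p d : Vec n) : Mat n :=
  (1/2 : ℝ) • (vecMulVec p d - vecMulVec d p)

/-- Coadjoint action of `(r,d) ∈ E(n)` on `(L,p) ∈ so(n)* × (ℝⁿ)* ≃ so(n) × ℝⁿ`. -/
noncomputable def CoAd {n : ℕ} (r : Mat n) (d : Vec n) (L : Mat n) (p : Vec n) :
    Mat n × Vec n :=
  (r * L * r⁻¹ + mu (r *ᵥ p) d, r *ᵥ p)

lemma vecMulVec_mulVec' {n : ℕ} (p d q : Vec n) :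
    vecMulVec p d *ᵥ q = (d ⬝ᵥ q) • p := by
  ext i
  simp [vecMulVec_apply, mulVec, dotProduct, Finset.mul_sum, mul_assoc, mul_comm,
    mul_left_comm]

lemma mu_zero_right {n : ℕ} (p : Vec n) : mu p 0 = 0 := by
  ext i j
  simp [mu, vecMulVec_apply]

lemma skew_cancel {n : ℕ} {ω : Mat n} (hω : IsSkew ω) {d : Vec n}
    (h : ω *ᵥ (ω *ᵥ d) = 0) : ω *ᵥ d = 0 := by
  have key : (ω *ᵥ d) ⬝ᵥ (ω *ᵥ d) = 0 := by
    rw [dotProduct_mulVec, ← mulVec_transpose, hω, neg_mulVec, h, neg_zero,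
      zero_dotProduct]
  exact dotProduct_self_eq_zero.mp key

lemma mu_eq_zero_of_mulVec {n : ℕ} {p d : Vec n} (h : mu p d *ᵥ p = 0) :
    mu p d = 0 := by
  have h' : (1/2 : ℝ) • ((d ⬝ᵥ p) • p - (p ⬝ᵥ p) • d) = 0 := by
    have h0 := h
    rw [mu, Matrix.smul_mulVec, sub_mulVec, vecMulVec_mulVec',
      vecMulVec_mulVec'] at h0
    exact h0
  have key : ∀ k, (d ⬝ᵥ p) * p k = (p ⬝ᵥ p) * d k := by
    intro k
    have := congrFun h' k
    simp only [Pi.smul_apply, Pi.sub_apply, Pi.zero_apply, smul_eq_mul] at this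
    linarith
  by_cases hp : p ⬝ᵥ p = 0
  · have : p = 0 := dotProduct_self_eq_zero.mp hp
    ext i j
    simp [mu, vecMulVec_apply, this]
  · ext i j
    have hi := key i
    have hj := key j
    have : (p ⬝ᵥ p) * (p i * d j - d i * p j) = 0 := by
      linear_combination p j * hi - p i * hj
    have h0 : p i * d j - d i * p j = 0 := by
      rcases mul_eq_zero.mp this with h' | h'
      · exact absurd h' hp
      · exact h'
    simp [mu, vecMulVec_apply]
    linarith

/-- Two points of `Δ` lie in the same adjoint orbit of `E(n)` iff they lie in the same
coadjoint orbit of `E(n)`. -/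
theorem stmt6 {n : ℕ} (ω₁ : Mat n) (hω₁ : IsSkew ω₁) (v₁ : Vec n) (h₁ : ω₁ *ᵥ v₁ = 0)
    (ω₂ : Mat n) (hω₂ : IsSkew ω₂) (v₂ : Vec n) (h₂ : ω₂ *ᵥ v₂ = 0) :
    (∃ (r : Mat n) (d : Vec n), IsOrth r ∧ Ad r d ω₁ v₁ = (ω₂, v₂)) ↔
    (∃ (r : Mat n) (d : Vec n), IsOrth r ∧ CoAd r d ω₁ v₁ = (ω₂, v₂)) := by
  constructor
  · rintro ⟨r, d, hr, hAd⟩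
    have hrinv : r⁻¹ = rᵀ := inv_eq_right_inv hr.1
    have hA1 : r * ω₁ * r⁻¹ = ω₂ := congrArg Prod.fst hAd
    have hA2 : r *ᵥ v₁ - (r * ω₁ * r⁻¹) *ᵥ d = v₂ := congrArg Prod.snd hAd
    have hker : ω₂ *ᵥ (r *ᵥ v₁) = 0 := by
      rw [← hA1, hrinv]
      rw [mulVec_mulVec, Matrix.mul_assoc, Matrix.mul_assoc, hr.2, Matrix.mul_one,
        ← mulVec_mulVec, h₁, mulVec_zero]
    have hd : ω₂ *ᵥ d = 0 := by
      apply skew_cancel hω₂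
      have : ω₂ *ᵥ v₂ = ω₂ *ᵥ (r *ᵥ v₁) - ω₂ *ᵥ (ω₂ *ᵥ d) := by
        rw [← hA2, hA1, mulVec_sub]
      rw [h₂, hker, zero_sub, eq_comm, neg_eq_zero] at this
      exact this
    have hv : r *ᵥ v₁ = v₂ := by
      rw [← hA2, hA1, hd, sub_zero]
    refine ⟨r, 0, hr, ?_⟩
    simp [CoAd, mu_zero_right, hA1, hv]
  · rintro ⟨r, d, hr, hC⟩
    have hrinv : r⁻¹ = rᵀ := inv_eq_right_inv hr.1
    have hC1 : r * ω₁ * r⁻¹ + mu (r *ᵥ v₁) d = ω₂ := congrArg Prod.fst hC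
    have hC2 : r *ᵥ v₁ = v₂ := congrArg Prod.snd hC
    have hker : (r * ω₁ * r⁻¹) *ᵥ v₂ = 0 := by
      rw [← hC2, hrinv]
      rw [mulVec_mulVec, Matrix.mul_assoc, Matrix.mul_assoc, hr.2, Matrix.mul_one,
        ← mulVec_mulVec, h₁, mulVec_zero]
    have hmu : mu v₂ d = 0 := by
      apply mu_eq_zero_of_mulVec
      have : ω₂ *ᵥ v₂ = (r * ω₁ * r⁻¹) *ᵥ v₂ + mu v₂ d *ᵥ v₂ := by
        rw [← hC1, hC2, add_mulVec]
      rw [h₂, hker, zero_add, eq_comm] at this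
      exact this
    have hω : r * ω₁ * r⁻¹ = ω₂ := by
      rw [← hC1, hC2, hmu, add_zero]
    refine ⟨r, 0, hr, ?_⟩
    simp [Ad, hω, hC2]
end

section
/- Let (ω,v) ∈ so(n) × ℝⁿ satisfy ω v = 0. Then the adjoint orbit {Ad_g(ω,v) : g ∈ E(n)} and the coadjoint orbit {Ad*_g(ω,v) : g ∈ E(n)}, each equipped with the subspace topology from the finite-dimensional real normed space so(n) × ℝⁿ, are homotopy equivalent topological spaces. -/
open Matrix

/-!
Both orbits are unions of affine fibres `d ↦ Ad r d ω v`, `d ↦ CoAd r d ω v` through the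
`O(n)`-orbit `{(r ω r⁻¹, r v)}`, and both deformation retract onto it along straight lines.
On the adjoint side the retraction replaces `w` by `s(M) w`, where `s` is a polynomial with
`s(0) = 1` and `s(ω) ω = 0`; it exists because `ker ω² = ker ω` for skew `ω`, and `s(M)` kills
the fibre direction `im M` while fixing `r v ∈ ker M`. On the coadjoint side it subtracts the
`μ`-component of `L`, which is recovered from `(L, p)` as `(2/|v|²) μ(L p, p)` because
`r ω r⁻¹` kills `p = r v`.
-/

open Set Polynomial

open scoped ContinuousMap

namespace ContinuousMap.HomotopyEquiv

variable {E : Type*} [AddCommGroup E] [TopologicalSpace E] [IsTopologicalAddGroup E]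
  [Module ℝ E] [ContinuousSMul ℝ E]

noncomputable def ofSegmentRetraction {A B : Set E} (ρ : E → E) (hρ : ContinuousOn ρ A)
    (hBA : B ⊆ A) (hρA : MapsTo ρ A B) (hρB : ∀ x ∈ B, ρ x = x)
    (hseg : ∀ x ∈ A, segment ℝ (ρ x) x ⊆ A) : A ≃ₕ B where
  toFun := ⟨hρA.restrict, hρ.mapsToRestrict hρA⟩
  invFun := ⟨inclusion hBA, continuous_inclusion hBA⟩
  left_inv := by
    let H := Homotopy.affine ⟨fun x : A => ρ x, hρ.domRestrict⟩
      ⟨Subtype.val, continuous_subtype_val⟩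
    refine ⟨{
      toFun q := ⟨H q, hseg _ q.2.2 (Path.range_segment (ρ q.2) q.2 ▸ mem_range_self q.1)⟩
      continuous_toFun := H.continuous.subtype_mk _
      map_zero_left x := Subtype.ext (H.apply_zero x)
      map_one_left x := Subtype.ext (H.apply_one x) }⟩
  right_inv := by
    convert Homotopic.refl (ContinuousMap.id B)
    ext x
    exact hρB x x.2

noncomputable def ofRayRetraction {ι V : Type*} [AddCommGroup V] [Module ℝ V] {P : ι → Prop}
    {f : ι → V → E} {b : ι → E} (ρ : E → E) (hρ : ContinuousOn ρ {x | ∃ i d, P i ∧ f i d = x})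
    (hf : ∀ i d (θ : ℝ), f i (θ • d) = b i + θ • (f i d - b i))
    (hρf : ∀ i d, P i → ρ (f i d) = b i) :
    {x | ∃ i d, P i ∧ f i d = x} ≃ₕ {x | ∃ i, P i ∧ b i = x} :=
  have hf0 (i : ι) : f i 0 = b i := by simpa using hf i 0 0
  ofSegmentRetraction ρ hρ
    (by rintro _ ⟨i, hi, rfl⟩; exact ⟨i, 0, hi, hf0 i⟩)
    (by rintro _ ⟨i, d, hi, rfl⟩; exact ⟨i, hi, (hρf i d hi).symm⟩)
    (by rintro _ ⟨i, hi, rfl⟩; rw [← hf0 i, hρf i 0 hi, hf0 i])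
    (by
      rintro _ ⟨i, d, hi, rfl⟩
      rw [hρf i d hi, segment_eq_image']
      rintro _ ⟨θ, -, rfl⟩
      exact ⟨i, θ • d, hi, hf i d θ⟩)

end ContinuousMap.HomotopyEquiv

lemma aeval_mul_mul_nonsing_inv {m R : Type*} [Fintype m] [DecidableEq m] [CommRing R]
    {r : Matrix m m R} (hr : IsUnit r.det) (M : Matrix m m R) (p : R[X]) :
    aeval (r * M * r⁻¹) p = r * aeval M p * r⁻¹ := by
  lift r to (Matrix m m R)ˣ using (isUnit_iff_isUnit_det r).2 hr
  rw [← coe_units_inv]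
  exact aeval_algHom_apply (MulSemiringAction.toAlgEquiv R _ (ConjAct.toConjAct r)) M p

lemma aeval_mulVec_of_mulVec_eq_zero {m R : Type*} [Fintype m] [DecidableEq m] [CommRing R]
    {A : Matrix m m R} {v : m → R} (hAv : A *ᵥ v = 0) (p : R[X]) :
    aeval A p *ᵥ v = p.eval 0 • v := by
  conv_lhs => rw [← divX_mul_X_add p]
  rw [map_add, map_mul, aeval_X, aeval_C, add_mulVec, ← mulVec_mulVec, hAv, mulVec_zero,
    zero_add, Algebra.algebraMap_eq_smul_one, smul_mulVec, one_mulVec, coeff_zero_eq_eval_zero]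

namespace IsSkew

variable {n : ℕ} {ω : Mat n}

lemma mul_eq_zero_of_mul_mul_eq_zero {m : Type*} [Fintype m] (hω : IsSkew ω)
    {Y : Matrix (Fin n) m ℝ} (h : ω * (ω * Y) = 0) : ω * Y = 0 := by
  have hgram : (ω * Y)ᵀ * (ω * Y) = -(Yᵀ * (ω * (ω * Y))) := by
    rw [transpose_mul, hω]
    simp only [Matrix.mul_neg, Matrix.neg_mul, Matrix.mul_assoc]
  rw [← conjTranspose_mul_self_eq_zero, conjTranspose_eq_transpose_of_trivial, hgram, h,
    Matrix.mul_zero, neg_zero]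

lemma mul_eq_zero_of_pow_succ_mul_eq_zero {m : Type*} [Fintype m] (hω : IsSkew ω)
    {Y : Matrix (Fin n) m ℝ} (k : ℕ) (h : ω ^ (k + 1) * Y = 0) : ω * Y = 0 := by
  induction k with
  | zero => simpa using h
  | succ k ih =>
    refine ih ?_
    rw [pow_succ', Matrix.mul_assoc]
    refine hω.mul_eq_zero_of_mul_mul_eq_zero ?_
    rwa [← Matrix.mul_assoc ω (ω ^ k), ← pow_succ', ← Matrix.mul_assoc, ← pow_succ']

lemma exists_aeval_mul_eq_zero (hω : IsSkew ω) :
    ∃ s : ℝ[X], s.eval 0 = 1 ∧ aeval ω s * ω = 0 := by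
  set k := ω.charpoly.rootMultiplicity 0
  set g := ω.charpoly /ₘ (X - C 0) ^ k
  have hg0 : g.eval 0 ≠ 0 :=
    eval_divByMonic_pow_rootMultiplicity_ne_zero 0 ω.charpoly_monic.ne_zero
  have hpow : ω ^ k * aeval ω g = 0 := by
    have h := ω.aeval_self_charpoly
    rwa [← pow_mul_divByMonic_rootMultiplicity_eq ω.charpoly 0, map_mul, map_pow, map_sub,
      aeval_X, aeval_C, map_zero, sub_zero] at h
  have hgω : aeval ω g * ω = 0 := by
    have hcomm : aeval ω g * ω = ω * aeval ω g := by
      simpa only [map_mul, aeval_X] using congrArg (aeval ω) (mul_comm g X)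
    rw [hcomm]
    exact hω.mul_eq_zero_of_pow_succ_mul_eq_zero k
      (by rw [pow_succ', Matrix.mul_assoc, hpow, Matrix.mul_zero])
  refine ⟨C (g.eval 0)⁻¹ * g, by simp [hg0], ?_⟩
  rw [map_mul, Matrix.mul_assoc, hgω, Matrix.mul_zero]

end IsSkew

section Orbits

variable {n : ℕ} {ω : Mat n} {v : Vec n} {r : Mat n}

lemma IsOrth.isUnit_det (hr : IsOrth r) : IsUnit r.det := isUnit_det_of_right_inverse hr.1

lemma IsOrth.dotProduct_mulVec_mulVec (hr : IsOrth r) (p q : Vec n) :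
    (r *ᵥ p) ⬝ᵥ (r *ᵥ q) = p ⬝ᵥ q := by
  rw [dotProduct_mulVec, ← mulVec_transpose, mulVec_mulVec, hr.2, one_mulVec]

lemma mulVec_mulVec_eq_zero_of_conj (hr : IsUnit r.det) (hωv : ω *ᵥ v = 0) :
    (r * ω * r⁻¹) *ᵥ (r *ᵥ v) = 0 := by
  rw [mulVec_mulVec, nonsing_inv_mul_cancel_right r _ hr, ← mulVec_mulVec, hωv, mulVec_zero]

lemma mu_zero_left (d : Vec n) : mu 0 d = 0 := by simp [mu]

lemma mu_smul_right (p d : Vec n) (c : ℝ) : mu p (c • d) = c • mu p d := by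
  simp only [mu, vecMulVec_smul, smul_vecMulVec, smul_sub, smul_comm c]

lemma mu_mulVec (p d q : Vec n) :
    mu p d *ᵥ q = (1 / 2 : ℝ) • ((d ⬝ᵥ q) • p - (p ⬝ᵥ q) • d) := by
  simp [mu, smul_mulVec, sub_mulVec, vecMulVec_mulVec]

lemma mu_mu_mulVec_self (p d : Vec n) : mu (mu p d *ᵥ p) p = (p ⬝ᵥ p / 2) • mu p d := by
  rw [mu_mulVec]
  ext i j
  simp [mu, vecMulVec_apply]
  ring

lemma continuous_mu : Continuous fun x : Vec n × Vec n => mu x.1 x.2 := by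
  unfold mu; fun_prop

def adjointOrbit (ω : Mat n) (v : Vec n) : Set (Mat n × Vec n) :=
  {x | ∃ (r : Mat n) (d : Vec n), IsOrth r ∧ Ad r d ω v = x}

def coadjointOrbit (ω : Mat n) (v : Vec n) : Set (Mat n × Vec n) :=
  {x | ∃ (r : Mat n) (d : Vec n), IsOrth r ∧ CoAd r d ω v = x}

def orthogonalOrbit (ω : Mat n) (v : Vec n) : Set (Mat n × Vec n) :=
  {x | ∃ r : Mat n, IsOrth r ∧ (r * ω * r⁻¹, r *ᵥ v) = x}

lemma Ad_smul (r : Mat n) (d : Vec n) (θ : ℝ) :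
    Ad r (θ • d) ω v = (r * ω * r⁻¹, r *ᵥ v) + θ • (Ad r d ω v - (r * ω * r⁻¹, r *ᵥ v)) := by
  simp only [Ad, Prod.mk_add_mk, Prod.smul_mk, Prod.mk_sub_mk, sub_self, smul_zero, add_zero,
    mulVec_smul, Prod.mk.injEq, true_and]
  module

lemma CoAd_smul (r : Mat n) (d : Vec n) (θ : ℝ) :
    CoAd r (θ • d) ω v = (r * ω * r⁻¹, r *ᵥ v) + θ • (CoAd r d ω v - (r * ω * r⁻¹, r *ᵥ v)) := by
  simp only [CoAd, Prod.mk_add_mk, Prod.smul_mk, Prod.mk_sub_mk, sub_self, smul_zero, add_zero,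
    mu_smul_right, add_sub_cancel_left]

noncomputable def adjointRetraction (s : ℝ[X]) (x : Mat n × Vec n) : Mat n × Vec n :=
  (x.1, aeval x.1 s *ᵥ x.2)

noncomputable def coadjointRetraction (c : ℝ) (x : Mat n × Vec n) : Mat n × Vec n :=
  (x.1 - c • mu (x.1 *ᵥ x.2) x.2, x.2)

lemma continuous_adjointRetraction (s : ℝ[X]) : Continuous (adjointRetraction (n := n) s) := by
  unfold adjointRetraction
  have := s.continuous_aeval (A := Mat n)
  fun_prop

lemma continuous_coadjointRetraction (c : ℝ) :
    Continuous (coadjointRetraction (n := n) c) := by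
  unfold coadjointRetraction
  have := continuous_mu (n := n)
  fun_prop

lemma adjointRetraction_Ad {s : ℝ[X]} (hsv : aeval ω s *ᵥ v = v) (hsω : aeval ω s * ω = 0)
    (hr : IsUnit r.det) (d : Vec n) :
    adjointRetraction s (Ad r d ω v) = (r * ω * r⁻¹, r *ᵥ v) := by
  have hsM : aeval (r * ω * r⁻¹) s * (r * ω * r⁻¹) = 0 := by
    rw [aeval_mul_mul_nonsing_inv hr, ← Matrix.mul_assoc, ← Matrix.mul_assoc,
      nonsing_inv_mul_cancel_right r _ hr, Matrix.mul_assoc r, hsω, Matrix.mul_zero,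
      Matrix.zero_mul]
  have hsp : aeval (r * ω * r⁻¹) s *ᵥ (r *ᵥ v) = r *ᵥ v := by
    rw [aeval_mul_mul_nonsing_inv hr, mulVec_mulVec, nonsing_inv_mul_cancel_right r _ hr,
      ← mulVec_mulVec, hsv]
  simp only [adjointRetraction, Ad]
  rw [mulVec_sub, hsp, mulVec_mulVec, hsM, zero_mulVec, sub_zero]

lemma coadjointRetraction_CoAd (hωv : ω *ᵥ v = 0) (hr : IsOrth r) (d : Vec n) :
    coadjointRetraction (2 / (v ⬝ᵥ v)) (CoAd r d ω v) = (r * ω * r⁻¹, r *ᵥ v) := by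
  have hmu : (2 / (v ⬝ᵥ v)) • mu ((r * ω * r⁻¹ + mu (r *ᵥ v) d) *ᵥ r *ᵥ v) (r *ᵥ v)
      = mu (r *ᵥ v) d := by
    rw [add_mulVec, mulVec_mulVec_eq_zero_of_conj hr.isUnit_det hωv, zero_add,
      mu_mu_mulVec_self, hr.dotProduct_mulVec_mulVec, smul_smul]
    rcases eq_or_ne v 0 with rfl | hv
    · simp [mu_zero_left]
    · rw [div_mul_div_cancel₀ (dotProduct_self_eq_zero.not.2 hv), div_self two_ne_zero, one_smul]
  rw [coadjointRetraction, CoAd, hmu, add_sub_cancel_right]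

noncomputable def adjointOrbitHomotopyEquiv {s : ℝ[X]} (hsv : aeval ω s *ᵥ v = v)
    (hsω : aeval ω s * ω = 0) : adjointOrbit ω v ≃ₕ orthogonalOrbit ω v :=
  .ofRayRetraction (adjointRetraction s) (continuous_adjointRetraction s).continuousOn
    Ad_smul fun _ d hr => adjointRetraction_Ad hsv hsω hr.isUnit_det d

noncomputable def coadjointOrbitHomotopyEquiv (hωv : ω *ᵥ v = 0) :
    coadjointOrbit ω v ≃ₕ orthogonalOrbit ω v :=
  .ofRayRetraction (coadjointRetraction _) (continuous_coadjointRetraction _).continuousOn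
    CoAd_smul fun _ d hr => coadjointRetraction_CoAd hωv hr d

end Orbits

/-- For `(ω,v) ∈ Δ`, the adjoint and coadjoint orbits of `E(n)` through `(ω,v)` are
homotopy equivalent. -/
theorem stmt8 {n : ℕ} (ω : Mat n) (hω : IsSkew ω) (v : Vec n) (hωv : ω *ᵥ v = 0) :
    Nonempty
      (ContinuousMap.HomotopyEquiv
        {x : Mat n × Vec n | ∃ (r : Mat n) (d : Vec n), IsOrth r ∧ Ad r d ω v = x}
        {x : Mat n × Vec n | ∃ (r : Mat n) (d : Vec n), IsOrth r ∧ CoAd r d ω v = x}) := by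
  obtain ⟨s, hs0, hsω⟩ := hω.exists_aeval_mul_eq_zero
  have hsv : aeval ω s *ᵥ v = v := by
    rw [aeval_mulVec_of_mulVec_eq_zero hωv, hs0, one_smul]
  exact ⟨(adjointOrbitHomotopyEquiv hsv hsω).trans (coadjointOrbitHomotopyEquiv hωv).symm⟩
end

section
/- Let p ∈ ℝⁿ be nonzero. Then the coadjoint orbit of E(n) through (0,p), equipped with the subspace topology from so(n) × ℝⁿ, is homeomorphic to the set {(u,w) ∈ ℝⁿ × ℝⁿ : ‖u‖ = 1 and ⟨u,w⟩ = 0} (the tangent bundle of the unit sphere S^{n−1}, realized as a subspace of ℝⁿ × ℝⁿ). (This orbit is the manifold of oriented affine lines in ℝⁿ.) -/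
/-!
Orthogonal matrices act transitively on each sphere `q ⬝ᵥ q = c` (a reflection carries `p`
to `q`), so the orbit is `{(μ(q, d), q) : q ⬝ᵥ q = p ⬝ᵥ p}`. With `ρ = ‖p‖` the map
`(L, q) ↦ (q / ρ, L q)` identifies it with the tangent bundle of the unit sphere; the inverse is
`(u, w) ↦ (μ(ρ u, -2 w / ρ²), ρ u)`, by the identities `μ(q, d) q = ½⟨d, q⟩ q - ½‖q‖² d` and
`μ(q, q) = 0`.
-/

open Matrix

open scoped RealInnerProductSpace

section

variable {n : ℕ}

lemma norm_toLp_sq (x : Vec n) : ‖WithLp.toLp 2 x‖ ^ 2 = x ⬝ᵥ x := by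
  rw [← real_inner_self_eq_norm_sq, EuclideanSpace.inner_toLp_toLp, star_trivial]

lemma isOrth_of_mem_orthogonalGroup {r : Mat n} (hr : r ∈ orthogonalGroup (Fin n) ℝ) :
    IsOrth r :=
  ⟨(mem_orthogonalGroup_iff _ _).mp hr, (mem_orthogonalGroup_iff' _ _).mp hr⟩

theorem exists_isOrth_mulVec_eq {p q : Vec n} (h : q ⬝ᵥ q = p ⬝ᵥ p) :
    ∃ r : Mat n, IsOrth r ∧ r *ᵥ p = q := by
  let b := EuclideanSpace.basisFun (Fin n) ℝ
  let f := Submodule.reflection (ℝ ∙ (WithLp.toLp 2 p - WithLp.toLp 2 q))ᗮ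
  have hnorm : ‖WithLp.toLp 2 p‖ = ‖WithLp.toLp 2 q‖ := by
    rw [← sq_eq_sq₀ (norm_nonneg _) (norm_nonneg _), norm_toLp_sq, norm_toLp_sq, h]
  refine ⟨f.toMatrix b.toBasis b.toBasis,
    isOrth_of_mem_orthogonalGroup (f.toMatrix_mem_unitaryGroup b b), ?_⟩
  have hrepr : ∀ x, ⇑(b.toBasis.repr x) = WithLp.ofLp x := fun _ => rfl
  have hfp : f (WithLp.toLp 2 p) = WithLp.toLp 2 q := Submodule.reflection_sub hnorm
  have hmul := LinearMap.toMatrix_mulVec_repr b.toBasis b.toBasis f.toLinearMap (WithLp.toLp 2 p)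
  rw [hrepr, hrepr] at hmul
  simpa [hfp] using hmul

lemma IsOrth.dotProduct_mulVec_self {r : Mat n} (hr : IsOrth r) (x : Vec n) :
    (r *ᵥ x) ⬝ᵥ (r *ᵥ x) = x ⬝ᵥ x := by
  rw [dotProduct_mulVec, ← mulVec_transpose, mulVec_mulVec, hr.2, one_mulVec]

def muOrbit (c : ℝ) : Set (Mat n × Vec n) := {x | ∃ q d, q ⬝ᵥ q = c ∧ (mu q d, q) = x}

theorem coadjointOrbit_zero_eq_muOrbit (p : Vec n) :
    {x : Mat n × Vec n | ∃ (r : Mat n) (d : Vec n), IsOrth r ∧ CoAd r d 0 p = x} =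
      muOrbit (p ⬝ᵥ p) := by
  ext x
  constructor
  · rintro ⟨r, d, hr, rfl⟩
    exact ⟨r *ᵥ p, d, hr.dotProduct_mulVec_self p, by simp [CoAd]⟩
  · rintro ⟨q, d, hq, rfl⟩
    obtain ⟨r, hr, rfl⟩ := exists_isOrth_mulVec_eq hq
    exact ⟨r, d, hr, by simp [CoAd]⟩

lemma mu_mulVec_self (q d : Vec n) :
    mu q d *ᵥ q = ((1/2) * (d ⬝ᵥ q)) • q - ((1/2) * (q ⬝ᵥ q)) • d := by
  rw [mu, smul_mulVec, sub_mulVec, vecMulVec_mulVec, vecMulVec_mulVec, op_smul_eq_smul,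
    op_smul_eq_smul, smul_sub, smul_smul, smul_smul]

lemma dotProduct_mu_mulVec_self (q d : Vec n) : q ⬝ᵥ (mu q d *ᵥ q) = 0 := by
  rw [mu_mulVec_self, dotProduct_sub, dotProduct_smul, dotProduct_smul, dotProduct_comm q d,
    smul_eq_mul, smul_eq_mul]
  ring

lemma mu_smul_mulVec_self {q : Vec n} {k : ℝ} (hk : k * (q ⬝ᵥ q) = -2) (d : Vec n) :
    mu q (k • (mu q d *ᵥ q)) = mu q d := by
  rw [mu_mulVec_self]
  ext i j
  simp only [mu, Matrix.smul_apply, Matrix.sub_apply, vecMulVec_apply,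
    Pi.smul_apply, Pi.sub_apply, smul_eq_mul]
  linear_combination (-(1/4) * (q i * d j - d i * q j)) * hk

@[fun_prop]
lemma Continuous.mu {X : Type*} [TopologicalSpace X] {f g : X → Vec n} (hf : Continuous f)
    (hg : Continuous g) : Continuous fun x => _root_.mu (f x) (g x) := by
  unfold _root_.mu; fun_prop

def sphereTangent (n : ℕ) : Set (Vec n × Vec n) := {y | y.1 ⬝ᵥ y.1 = 1 ∧ y.1 ⬝ᵥ y.2 = 0}

noncomputable def muOrbitHomeomorph {ρ : ℝ} (hρ : ρ ≠ 0) :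
    muOrbit (n := n) (ρ ^ 2) ≃ₜ sphereTangent n where
  toFun x := ⟨(ρ⁻¹ • x.1.2, x.1.1 *ᵥ x.1.2), by
    obtain ⟨_, ⟨q, d, hq, rfl⟩⟩ := x
    refine ⟨?_, ?_⟩
    · simp only [smul_dotProduct, dotProduct_smul, hq, smul_eq_mul]
      field_simp
    · simp only [smul_dotProduct, dotProduct_mu_mulVec_self, smul_zero]⟩
  invFun y := ⟨(mu (ρ • y.1.1) ((-2 / ρ ^ 2) • y.1.2), ρ • y.1.1), by
    obtain ⟨⟨u, w⟩, hu, -⟩ := y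
    refine ⟨ρ • u, _, ?_, rfl⟩
    simp only [smul_dotProduct, dotProduct_smul, hu, smul_eq_mul]
    ring⟩
  left_inv := by
    rintro ⟨_, ⟨q, d, hq, rfl⟩⟩
    have hq' : (-2 / ρ ^ 2) * (q ⬝ᵥ q) = -2 := by rw [hq]; field_simp
    ext1
    simp only [smul_smul, mul_inv_cancel₀ hρ, one_smul, mu_smul_mulVec_self hq']
  right_inv := by
    rintro ⟨⟨u, w⟩, hu, huw⟩
    dsimp only at hu huw
    refine Subtype.ext (Prod.ext (inv_smul_smul₀ hρ u) ?_)
    dsimp only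
    rw [mu_mulVec_self]
    simp only [smul_dotProduct, dotProduct_smul, dotProduct_comm w u, huw, hu, smul_eq_mul,
      mul_zero, zero_mul, zero_smul, zero_sub, smul_smul]
    rw [← neg_smul]
    convert one_smul ℝ w using 2
    field_simp
  continuous_toFun := by fun_prop
  continuous_invFun := by fun_prop

noncomputable def sphereTangentHomeomorph :
    sphereTangent n ≃ₜ {y : EuclideanSpace ℝ (Fin n) × EuclideanSpace ℝ (Fin n) |
      ‖y.1‖ = 1 ∧ ⟪y.1, y.2⟫ = 0} :=
  Homeomorph.subtype ((EuclideanSpace.equiv (Fin n) ℝ).symm.toHomeomorph.prodCongr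
    (EuclideanSpace.equiv (Fin n) ℝ).symm.toHomeomorph) fun ⟨u, w⟩ => by
      change u ⬝ᵥ u = 1 ∧ u ⬝ᵥ w = 0 ↔
        ‖WithLp.toLp 2 u‖ = 1 ∧ ⟪WithLp.toLp 2 u, WithLp.toLp 2 w⟫ = 0
      rw [EuclideanSpace.inner_toLp_toLp, star_trivial, dotProduct_comm w u, ← norm_toLp_sq,
        pow_eq_one_iff_of_nonneg (norm_nonneg _) two_ne_zero]

end

open scoped RealInnerProductSpace in
/-- For nonzero `p`, the coadjoint orbit of `E(n)` through `(0,p)` is homeomorphic to the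
tangent bundle of the unit sphere `S^{n-1} ⊂ ℝⁿ`. -/
theorem stmt17 {n : ℕ} (p : Vec n) (hp : p ≠ 0) :
    Nonempty
      (({x : Mat n × Vec n | ∃ (r : Mat n) (d : Vec n), IsOrth r ∧ CoAd r d 0 p = x}) ≃ₜ
       ({y : EuclideanSpace ℝ (Fin n) × EuclideanSpace ℝ (Fin n) |
          ‖y.1‖ = 1 ∧ ⟪y.1, y.2⟫ = 0})) := by
  have hρ : ‖WithLp.toLp 2 p‖ ≠ 0 := by simpa using hp
  rw [coadjointOrbit_zero_eq_muOrbit, ← norm_toLp_sq]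
  exact ⟨(muOrbitHomeomorph hρ).trans sphereTangentHomeomorph⟩
end
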